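/- Let p be an odd prime, let m ≤ l be natural numbers, let λ be an invertible symmetric m×m matrix over 𝔽_p, and let T(λ) denote the l×l block matrix fromBlocks λ 0 0 0 (i.e. diag(λ, 0_{l−m})). Then an invertible matrix γ ∈ GL_l(𝔽_p), written in blocks γ = [[a, e],[b, c]] with a of size m×m, e of size m×(l−m), b of size (l−m)×m and c of size (l−m)×(l−m), satisfies γᵀ · T(λ) · γ = T(λ) if and only if e = 0 and aᵀ · λ · a = λ; moreover in that case a and c are invertible. -/
import Mathlib


open Matrix

theorem stmt_0 (p : ℕ) (hp : p.Prime) (hp2 : p ≠ 2) (l m : ℕ) (hml : m ≤ l)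
    (lam : Matrix (Fin m) (Fin m) (ZMod p)) (hsym : lamᵀ = lam) (hlam : IsUnit lam)
    (γ : Matrix (Fin m ⊕ Fin (l - m)) (Fin m ⊕ Fin (l - m)) (ZMod p)) (hγ : IsUnit γ) :
    (γᵀ * Matrix.fromBlocks lam 0 0 0 * γ = Matrix.fromBlocks lam 0 0 0 ↔
      γ.toBlocks₁₂ = 0 ∧ (γ.toBlocks₁₁)ᵀ * lam * γ.toBlocks₁₁ = lam) ∧
    (γᵀ * Matrix.fromBlocks lam 0 0 0 * γ = Matrix.fromBlocks lam 0 0 0 →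
      IsUnit γ.toBlocks₁₁ ∧ IsUnit γ.toBlocks₂₂) := by
  set a := γ.toBlocks₁₁ with ha
  set e := γ.toBlocks₁₂ with he
  set b := γ.toBlocks₂₁ with hb
  set c := γ.toBlocks₂₂ with hc
  have hγb : γ = fromBlocks a e b c := (fromBlocks_toBlocks γ).symm
  have key : γᵀ * Matrix.fromBlocks lam 0 0 0 * γ =
      fromBlocks (aᵀ * lam * a) (aᵀ * lam * e) (eᵀ * lam * a) (eᵀ * lam * e) := by
    rw [hγb, fromBlocks_transpose, fromBlocks_multiply, fromBlocks_multiply]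
    simp [Matrix.mul_assoc]
  have main : γᵀ * Matrix.fromBlocks lam 0 0 0 * γ = Matrix.fromBlocks lam 0 0 0 ↔
      e = 0 ∧ aᵀ * lam * a = lam := by
    rw [key]
    constructor
    · intro h
      rw [fromBlocks_inj] at h
      obtain ⟨h1, h2, h3, h4⟩ := h
      have hau : IsUnit a := by
        have : IsUnit (aᵀ * lam * a) := by rw [h1]; exact hlam
        rw [Matrix.isUnit_iff_isUnit_det] at this ⊢
        rw [Matrix.det_mul, Matrix.det_mul] at this
        exact isUnit_of_mul_isUnit_right this
      have hale : IsUnit (aᵀ * lam) := by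
        rw [Matrix.isUnit_iff_isUnit_det, Matrix.det_mul, Matrix.det_transpose]
        exact (hau.map (Matrix.detMonoidHom)).mul (hlam.map (Matrix.detMonoidHom))
      have he0 : e = 0 := by
        have := congrArg (fun M => (aᵀ * lam)⁻¹ * M) h2
        simpa [← Matrix.mul_assoc,
          Matrix.nonsing_inv_mul _ ((Matrix.isUnit_iff_isUnit_det _).mp hale)] using this
      exact ⟨he0, h1⟩
    · rintro ⟨he0, h1⟩
      rw [he0, h1]
      simp [fromBlocks]
  refine ⟨main, fun h => ?_⟩
  obtain ⟨he0, h1⟩ := main.mp h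
  have hau : IsUnit a := by
    have : IsUnit (aᵀ * lam * a) := by rw [h1]; exact hlam
    rw [Matrix.isUnit_iff_isUnit_det] at this ⊢
    rw [Matrix.det_mul, Matrix.det_mul] at this
    exact isUnit_of_mul_isUnit_right this
  refine ⟨hau, ?_⟩
  have hdet : IsUnit γ.det := (Matrix.isUnit_iff_isUnit_det γ).mp hγ
  rw [hγb, he0, Matrix.det_fromBlocks_zero₁₂] at hdet
  rw [Matrix.isUnit_iff_isUnit_det]
  exact isUnit_of_mul_isUnit_right hdet
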